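/- arXiv:2107.00205 — 4 statements merged into one kernel-verified Lean document; each statement's English description precedes it below -/
import Mathlib

section
/- Let X be a compact metric space with no isolated points, T : X → X continuous, and suppose the set Trans(X,T) of points with dense forward orbit is nonempty. For a continuous f : X → ℝ, if there exists a transitive point x whose Birkhoff averages of f do not converge (i.e. x ∈ I(f,T) ∩ Trans(X,T)), then the irregular set I(f,T) is residual in X. -/
/-!
Boundedness of `f` makes the Birkhoff averages along the orbit of `T^[k] x` differ from those
along the orbit of `x` by a null sequence. So if the averages at the transitive point `x`
oscillate, crossing levels `α < β` infinitely often in both directions, then so do those at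
every point of the dense orbit of `x`. Since the averages are continuous, the points whose
averages are frequently below `α` form a Gδ set, and likewise for frequently above `β`; both
contain the orbit, hence are residual, and no point of their intersection has convergent averages.
-/

open Filter Topology Set Bornology

theorem Filter.Frequently.lt_of_tendsto_sub {ι : Type*} {l : Filter ι} {u v : ι → ℝ} {a b : ℝ}
    (h : ∃ᶠ n in l, u n < a) (hab : a < b) (huv : Tendsto (fun n ↦ v n - u n) l (𝓝 0)) :
    ∃ᶠ n in l, v n < b := by
  have hclose : ∀ᶠ n in l, v n - u n < b - a := huv.eventually (gt_mem_nhds (sub_pos.2 hab))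
  exact (h.and_eventually hclose).mono fun n hn ↦ by linarith [hn.1, hn.2]

theorem Filter.Frequently.gt_of_tendsto_sub {ι : Type*} {l : Filter ι} {u v : ι → ℝ} {a b : ℝ}
    (h : ∃ᶠ n in l, b < u n) (hab : a < b) (huv : Tendsto (fun n ↦ v n - u n) l (𝓝 0)) :
    ∃ᶠ n in l, a < v n := by
  have hclose : ∀ᶠ n in l, a - b < v n - u n := huv.eventually (lt_mem_nhds (sub_neg.2 hab))
  exact (h.and_eventually hclose).mono fun n hn ↦ by linarith [hn.1, hn.2]

theorem not_tendsto_of_frequently_lt_of_frequently_gt {ι α : Type*} [LinearOrder α]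
    [TopologicalSpace α] [OrderTopology α] {l : Filter ι} {u : ι → α} {a b c : α} (hab : a < b)
    (ha : ∃ᶠ n in l, u n < a) (hb : ∃ᶠ n in l, b < u n) : ¬ Tendsto u l (𝓝 c) := by
  intro hc
  rcases lt_or_ge c b with hcb | hbc
  · exact hb.and_eventually (hc.eventually_lt_const hcb) |>.exists.elim
      fun n hn ↦ lt_asymm hn.1 hn.2
  · exact ha.and_eventually (hc.eventually_const_lt (hab.trans_le hbc)) |>.exists.elim
      fun n hn ↦ lt_asymm hn.1 hn.2

theorem exists_frequently_lt_and_frequently_gt_of_not_tendsto {u : ℕ → ℝ}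
    (hu : IsBounded (range u)) (h : ¬ ∃ c, Tendsto u atTop (𝓝 c)) :
    ∃ a b, a < b ∧ (∃ᶠ n in atTop, u n < a) ∧ ∃ᶠ n in atTop, b < u n := by
  have hle : IsBoundedUnder (· ≤ ·) atTop u := hu.bddAbove.isBoundedUnder_of_range
  have hge : IsBoundedUnder (· ≥ ·) atTop u := hu.bddBelow.isBoundedUnder_of_range
  have hlt : liminf u atTop < limsup u atTop :=
    (liminf_le_limsup hle hge).lt_of_ne fun heq ↦
      h ⟨_, tendsto_of_liminf_eq_limsup rfl heq.symm hle hge⟩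
  obtain ⟨a, hinf, ha⟩ := exists_between hlt
  obtain ⟨b, hab, hsup⟩ := exists_between ha
  exact ⟨a, b, hab, frequently_lt_of_liminf_lt hle.isCoboundedUnder_ge hinf,
    frequently_lt_of_lt_limsup hge.isCoboundedUnder_le hsup⟩

theorem residual_setOf_frequently_mem {X Y : Type*} [TopologicalSpace X] [TopologicalSpace Y]
    {A : ℕ → X → Y} (hA : ∀ n, Continuous (A n)) {U : Set Y} (hU : IsOpen U) {s : Set X}
    (hs : Dense s) (h : ∀ y ∈ s, ∃ᶠ n in atTop, A n y ∈ U) :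
    {y | ∃ᶠ n in atTop, A n y ∈ U} ∈ residual X := by
  have hGδ : {y | ∃ᶠ n in atTop, A n y ∈ U} = ⋂ N, ⋃ n ≥ N, A n ⁻¹' U := by
    ext y
    simp only [mem_ofPred_eq, frequently_atTop, mem_iInter, mem_iUnion, mem_preimage, exists_prop]
  rw [hGδ, countable_iInter_mem]
  intro N
  refine residual_of_dense_open (isOpen_biUnion fun n _ ↦ hU.preimage (hA n)) (hs.mono ?_)
  intro y hy
  obtain ⟨n, hn, hnU⟩ := frequently_atTop.1 (h y hy) N
  exact mem_biUnion hn hnU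

section BirkhoffAverage

variable {α E : Type*}

theorem continuous_birkhoffAverage (R : Type*) [DivisionSemiring R] [TopologicalSpace R]
    [TopologicalSpace α] [AddCommMonoid E] [TopologicalSpace E] [ContinuousAdd E] [Module R E]
    [ContinuousSMul R E] {f : α → α} {g : α → E} (hf : Continuous f) (hg : Continuous g)
    (n : ℕ) : Continuous (birkhoffAverage R f g n) :=
  continuous_const.smul (continuous_finsetSum _ fun k _ ↦ hg.comp (hf.iterate k))

variable [NormedAddCommGroup E] (𝕜 : Type*) [RCLike 𝕜] [NormedSpace 𝕜 E]

theorem isBounded_range_birkhoffAverage {g : α → E} (hg : IsBounded (range g)) (f : α → α)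
    (x : α) : IsBounded (range fun n ↦ birkhoffAverage 𝕜 f g n x) := by
  obtain ⟨C, hC⟩ := isBounded_iff_forall_norm_le.1 hg
  have hgC : ∀ y, ‖g y‖ ≤ C := fun y ↦ hC _ (mem_range_self y)
  refine isBounded_iff_forall_norm_le.2 ⟨C, forall_mem_range.2 fun n ↦ ?_⟩
  rcases n.eq_zero_or_pos with rfl | hn
  · simpa using (norm_nonneg _).trans (hgC x)
  have hsum : ‖birkhoffSum f g n x‖ ≤ n * C := by
    simpa [birkhoffSum] using norm_sum_le_of_le (Finset.range n) fun k _ ↦ hgC (f^[k] x)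
  calc ‖birkhoffAverage 𝕜 f g n x‖ = ‖birkhoffSum f g n x‖ / n := by
        simp [birkhoffAverage, norm_smul, div_eq_inv_mul]
    _ ≤ C := by rw [div_le_iff₀ (by exact_mod_cast hn)]; linarith

theorem tendsto_birkhoffAverage_iterate_sub_birkhoffAverage {g : α → E}
    (hg : IsBounded (range g)) (f : α → α) (x : α) (k : ℕ) :
    Tendsto (fun n ↦ birkhoffAverage 𝕜 f g n (f^[k] x) - birkhoffAverage 𝕜 f g n x) atTop
      (𝓝 0) := by
  induction k with
  | zero => simp
  | succ k ih =>
    simp_rw [Function.iterate_succ_apply']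
    simpa using (tendsto_birkhoffAverage_apply_sub_birkhoffAverage' 𝕜 hg f (f^[k] x)).add ih

end BirkhoffAverage

theorem stmt6_general {X : Type*} [MetricSpace X] [CompactSpace X]
    (T : X → X) (hT : Continuous T)
    (f : X → ℝ) (hf : Continuous f) (x : X)
    (hx1 : Dense (Set.range fun n : ℕ => T^[n] x))
    (hx2 : ¬ ∃ c : ℝ, Tendsto
      (fun n : ℕ => (n : ℝ)⁻¹ * ∑ i ∈ Finset.range n, f (T^[i] x)) atTop (𝓝 c)) :
    {y : X | ¬ ∃ c : ℝ, Tendsto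
      (fun n : ℕ => (n : ℝ)⁻¹ * ∑ i ∈ Finset.range n, f (T^[i] y)) atTop (𝓝 c)}
      ∈ residual X := by
  have hbdd : IsBounded (range f) := (isCompact_range hf).isBounded
  have hcont := continuous_birkhoffAverage ℝ hT hf
  obtain ⟨a, b, hab, hlow, hhigh⟩ := exists_frequently_lt_and_frequently_gt_of_not_tendsto
    (isBounded_range_birkhoffAverage ℝ hbdd T x) hx2
  obtain ⟨α, haα, hαb⟩ := exists_between hab
  obtain ⟨β, hαβ, hβb⟩ := exists_between hαb
  have hshift := tendsto_birkhoffAverage_iterate_sub_birkhoffAverage ℝ hbdd T x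
  have hlow' : {y | ∃ᶠ n in atTop, birkhoffAverage ℝ T f n y < α} ∈ residual X :=
    residual_setOf_frequently_mem hcont isOpen_Iio hx1 <|
      forall_mem_range.2 fun k ↦ hlow.lt_of_tendsto_sub haα (hshift k)
  have hhigh' : {y | ∃ᶠ n in atTop, β < birkhoffAverage ℝ T f n y} ∈ residual X :=
    residual_setOf_frequently_mem hcont isOpen_Ioi hx1 <|
      forall_mem_range.2 fun k ↦ hhigh.gt_of_tendsto_sub hβb (hshift k)
  filter_upwards [hlow', hhigh'] with y hy_low hy_high
  rintro ⟨c, hc⟩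
  exact not_tendsto_of_frequently_lt_of_frequently_gt hαβ hy_low hy_high hc

theorem stmt6 {X : Type*} [MetricSpace X] [CompactSpace X]
    (h0 : ∀ x : X, Filter.NeBot (𝓝[≠] x))
    (T : X → X) (hT : Continuous T)
    (htrans : {x : X | Dense (Set.range fun n : ℕ => T^[n] x)}.Nonempty)
    (f : X → ℝ) (hf : Continuous f) (x : X)
    (hx1 : Dense (Set.range fun n : ℕ => T^[n] x))
    (hx2 : ¬ ∃ c : ℝ, Tendsto
      (fun n : ℕ => (n : ℝ)⁻¹ * ∑ i ∈ Finset.range n, f (T^[i] x)) atTop (𝓝 c)) :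
    {y : X | ¬ ∃ c : ℝ, Tendsto
      (fun n : ℕ => (n : ℝ)⁻¹ * ∑ i ∈ Finset.range n, f (T^[i] y)) atTop (𝓝 c)}
      ∈ residual X :=
  stmt6_general T hT f hf x hx1 hx2
end

section
/- Let X be a compact metric space, T : X → X continuous, and x ∈ X. Define U_x = {f ∈ C(X,ℝ) : the Birkhoff averages (1/n) Σ_{i=0}^{n−1} f(T^i x) do not converge}. If U_x is nonempty, then U_x is open and dense in C(X,ℝ) with the supremum norm. -/
/-!
For fixed `x` and `n`, the Birkhoff average `f ↦ (1/n) ∑_{i<n} f (T^[i] x)` is linear and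
1-Lipschitz for the sup norm. Hence the functions whose averages converge form a linear subspace
which is closed (the limit passes through a uniformly equicontinuous family), and the
complement of a proper closed subspace is open and dense.
-/

open Filter Topology

section ConvergentSequences

variable (R N : Type*) [Semiring R] [AddCommMonoid N] [Module R N] [TopologicalSpace N]
  [ContinuousAdd N] [ContinuousConstSMul R N]

def convergentSequences : Submodule R (ℕ → N) where
  carrier := {u | ∃ c, Tendsto u atTop (𝓝 c)}
  zero_mem' := ⟨0, tendsto_const_nhds⟩
  add_mem' := fun ⟨a, ha⟩ ⟨b, hb⟩ => ⟨a + b, ha.add hb⟩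
  smul_mem' r _ := fun ⟨a, ha⟩ => ⟨r • a, ha.const_smul r⟩

end ConvergentSequences

theorem Submodule.dense_compl_of_ne_top {𝕜 M : Type*} [NontriviallyNormedField 𝕜]
    [TopologicalSpace M] [AddCommGroup M] [ContinuousAdd M] [Module 𝕜 M] [ContinuousSMul 𝕜 M]
    (s : Submodule 𝕜 M) (hs : s ≠ ⊤) : Dense (s : Set M)ᶜ :=
  interior_eq_empty_iff_dense_compl.1 <|
    Set.not_nonempty_iff_eq_empty.1 fun h => hs (s.eq_top_of_nonempty_interior' h)

section Equicontinuous

variable {α β : Type*} [PseudoMetricSpace α] [PseudoMetricSpace β] {F : ℕ → α → β}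

theorem UniformEquicontinuous.isClosed_setOf_cauchySeq (hF : UniformEquicontinuous F) :
    IsClosed {a | CauchySeq (F · a)} := by
  refine isClosed_of_closure_subset fun a ha => Metric.cauchySeq_iff.2 fun ε hε => ?_
  obtain ⟨δ, hδ, hFδ⟩ := Metric.uniformEquicontinuous_iff.1 hF (ε / 3) (by positivity)
  obtain ⟨b, hb, hab⟩ := Metric.mem_closure_iff.1 ha δ hδ
  obtain ⟨N, hN⟩ := Metric.cauchySeq_iff.1 hb (ε / 3) (by positivity)
  refine ⟨N, fun m hm n hn => ?_⟩
  calc dist (F m a) (F n a)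
      ≤ dist (F m a) (F m b) + dist (F m b) (F n b) + dist (F n b) (F n a) :=
        dist_triangle4 _ _ _ _
    _ < ε / 3 + ε / 3 + ε / 3 := by
        gcongr
        · exact hFδ a b hab m
        · exact hN m hm n hn
        · exact hFδ b a (by rwa [dist_comm]) n
    _ = ε := by ring

theorem UniformEquicontinuous.isClosed_setOf_exists_tendsto [CompleteSpace β]
    (hF : UniformEquicontinuous F) : IsClosed {a | ∃ c, Tendsto (F · a) atTop (𝓝 c)} := by
  convert hF.isClosed_setOf_cauchySeq using 1
  ext a
  exact ⟨fun ⟨_, hc⟩ => hc.cauchySeq, cauchySeq_tendsto_of_complete⟩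

end Equicontinuous

section BirkhoffAverage

variable {α : Type*}

def birkhoffAverageLinearMap (R M : Type*) [Field R] [AddCommMonoid M] [Module R M]
    (f : α → α) (x : α) : (α → M) →ₗ[R] ℕ → M where
  toFun g n := birkhoffAverage R f g n x
  map_add' g g' := by simp only [birkhoffAverage_add]; rfl
  map_smul' c g := by
    ext n
    simp only [birkhoffAverage, birkhoffSum, Pi.smul_apply, Finset.smul_sum, RingHom.id_apply]
    exact Finset.sum_congr rfl fun _ _ => smul_comm _ _ _

theorem norm_birkhoffAverage_le {𝕜 E : Type*} [RCLike 𝕜] [SeminormedAddCommGroup E]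
    [NormedSpace 𝕜 E] (f : α → α) {g : α → E} {C : ℝ} (hC : 0 ≤ C) (hg : ∀ y, ‖g y‖ ≤ C)
    (n : ℕ) (x : α) : ‖birkhoffAverage 𝕜 f g n x‖ ≤ C := by
  rcases eq_or_ne n 0 with rfl | hn
  · simpa using hC
  calc ‖birkhoffAverage 𝕜 f g n x‖
      = (n : ℝ)⁻¹ * ‖∑ k ∈ Finset.range n, g (f^[k] x)‖ := by
        rw [birkhoffAverage, birkhoffSum, norm_smul, norm_inv, RCLike.norm_natCast]
    _ ≤ (n : ℝ)⁻¹ * ∑ _k ∈ Finset.range n, C := by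
        gcongr
        exact norm_sum_le_of_le _ fun k _ => hg _
    _ = C := by simp [hn]

theorem lipschitzWith_birkhoffAverage_continuousMap (𝕜 : Type*) {X E : Type*} [RCLike 𝕜]
    [TopologicalSpace X] [CompactSpace X] [NormedAddCommGroup E] [NormedSpace 𝕜 E]
    (T : X → X) (n : ℕ) (x : X) :
    LipschitzWith 1 fun g : C(X, E) => birkhoffAverage 𝕜 T g n x := by
  refine LipschitzWith.of_dist_le_mul fun g g' => ?_
  rw [NNReal.coe_one, one_mul, dist_eq_norm, dist_eq_norm, ← Pi.sub_apply (birkhoffAverage 𝕜 T g n),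
    ← Pi.sub_apply, ← birkhoffAverage_sub, ← ContinuousMap.coe_sub]
  exact norm_birkhoffAverage_le T (norm_nonneg _) (ContinuousMap.norm_coe_le_norm _) n x

end BirkhoffAverage

theorem stmt7_general {X : Type*} [MetricSpace X] [CompactSpace X]
    (T : X → X) (x : X)
    (h : {f : C(X, ℝ) | ¬ ∃ c : ℝ, Tendsto
      (fun n : ℕ => (n : ℝ)⁻¹ * ∑ i ∈ Finset.range n, f (T^[i] x)) atTop (𝓝 c)}.Nonempty) :
    IsOpen {f : C(X, ℝ) | ¬ ∃ c : ℝ, Tendsto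
      (fun n : ℕ => (n : ℝ)⁻¹ * ∑ i ∈ Finset.range n, f (T^[i] x)) atTop (𝓝 c)} ∧
    Dense {f : C(X, ℝ) | ¬ ∃ c : ℝ, Tendsto
      (fun n : ℕ => (n : ℝ)⁻¹ * ∑ i ∈ Finset.range n, f (T^[i] x)) atTop (𝓝 c)} := by
  let S : Submodule ℝ C(X, ℝ) := (convergentSequences ℝ ℝ).comap
    ((birkhoffAverageLinearMap ℝ ℝ T x).comp (ContinuousMap.coeFnLinearMap ℝ))
  change (S : Set C(X, ℝ))ᶜ.Nonempty at h
  change IsOpen (S : Set C(X, ℝ))ᶜ ∧ Dense (S : Set C(X, ℝ))ᶜ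
  have hS_closed : IsClosed (S : Set C(X, ℝ)) :=
    (LipschitzWith.uniformEquicontinuous _ 1 fun n =>
      lipschitzWith_birkhoffAverage_continuousMap ℝ T n x).isClosed_setOf_exists_tendsto
  obtain ⟨g, hg⟩ := h
  exact ⟨hS_closed.isOpen_compl,
    S.dense_compl_of_ne_top fun hS_top => hg (hS_top ▸ Submodule.mem_top)⟩

theorem stmt7 {X : Type*} [MetricSpace X] [CompactSpace X]
    (T : X → X) (hT : Continuous T) (x : X)
    (h : {f : C(X, ℝ) | ¬ ∃ c : ℝ, Tendsto
      (fun n : ℕ => (n : ℝ)⁻¹ * ∑ i ∈ Finset.range n, f (T^[i] x)) atTop (𝓝 c)}.Nonempty) :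
    IsOpen {f : C(X, ℝ) | ¬ ∃ c : ℝ, Tendsto
      (fun n : ℕ => (n : ℝ)⁻¹ * ∑ i ∈ Finset.range n, f (T^[i] x)) atTop (𝓝 c)} ∧
    Dense {f : C(X, ℝ) | ¬ ∃ c : ℝ, Tendsto
      (fun n : ℕ => (n : ℝ)⁻¹ * ∑ i ∈ Finset.range n, f (T^[i] x)) atTop (𝓝 c)} :=
  stmt7_general T x h
end

section
/- Let X be a compact metric space and T : X → X a minimal continuous map. Then for every ε > 0 there exists m(ε) ∈ ℕ such that for all x₁, x₂ ∈ X, every n ∈ ℕ⁺ and every ε′ > 0, there exist l ∈ ℕ with 0 ≤ l ≤ m(ε) and z ∈ X satisfying d(z, x₁) < ε and d(T^{l+j} z, T^j x₂) < ε′ for all 0 ≤ j ≤ n − 1. -/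
/-!
Minimality plus compactness makes hitting times uniform: every point enters a fixed open set
within a bounded number of steps, and covering `X` by finitely many `ε/2`-balls gives one bound
`m` that brings any point `ε`-close to any target. Given `x₂`, pick `j₀` with `T^(j₀+m) x₂`
so close to `x₂` that its first `n` iterates shadow those of `x₂`, and let `z = T^k (T^j₀ x₂)`
with `k ≤ m` be the hit near `x₁`; then `l = m - k` works, since `T^l z = T^(j₀+m) x₂`.
-/

open Filter Topology

theorem exists_forall_exists_iterate_le_mem {X : Type*} [TopologicalSpace X] [CompactSpace X]
    {T : X → X} (hT : Continuous T) (hmin : ∀ x : X, Dense (Set.range fun n : ℕ => T^[n] x))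
    {U : Set X} (hU : IsOpen U) (hne : U.Nonempty) :
    ∃ N : ℕ, ∀ p : X, ∃ k ≤ N, T^[k] p ∈ U := by
  obtain ⟨t, ht⟩ := isCompact_univ.elim_finite_subcover (fun k : ℕ => T^[k] ⁻¹' U)
    (fun k => hU.preimage (hT.iterate k)) fun p _ => by
      obtain ⟨_, ⟨k, rfl⟩, hk⟩ := (hmin p).exists_mem_open hU hne
      exact Set.mem_iUnion.2 ⟨k, hk⟩
  refine ⟨t.sup id, fun p => ?_⟩
  obtain ⟨k, hk, hpk⟩ := Set.mem_iUnion₂.1 (ht (Set.mem_univ p))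
  exact ⟨k, Finset.le_sup (f := id) hk, hpk⟩

theorem exists_forall_exists_iterate_le_dist_lt {X : Type*} [PseudoMetricSpace X]
    [CompactSpace X] {T : X → X} (hT : Continuous T)
    (hmin : ∀ x : X, Dense (Set.range fun n : ℕ => T^[n] x)) {ε : ℝ} (hε : 0 < ε) :
    ∃ m : ℕ, ∀ p x : X, ∃ k ≤ m, dist (T^[k] p) x < ε := by
  have hε2 : 0 < ε / 2 := half_pos hε
  choose N hN using fun y : X =>
    exists_forall_exists_iterate_le_mem hT hmin Metric.isOpen_ball ⟨y, Metric.mem_ball_self hε2⟩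
  obtain ⟨F, hF⟩ := isCompact_univ.elim_finite_subcover (fun y : X => Metric.ball y (ε / 2))
    (fun _ => Metric.isOpen_ball) fun p _ => Set.mem_iUnion.2 ⟨p, Metric.mem_ball_self hε2⟩
  refine ⟨F.sup N, fun p x => ?_⟩
  obtain ⟨y, hyF, hxy⟩ := Set.mem_iUnion₂.1 (hF (Set.mem_univ x))
  obtain ⟨k, hk, hpk⟩ := hN y p
  refine ⟨k, hk.trans (Finset.le_sup hyF), ?_⟩
  calc dist (T^[k] p) x ≤ dist (T^[k] p) y + dist x y := dist_triangle_right _ _ _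
    _ < ε / 2 + ε / 2 := add_lt_add hpk hxy
    _ = ε := add_halves ε

theorem eventually_forall_lt_dist_iterate_lt {X : Type*} [PseudoMetricSpace X] {T : X → X}
    (hT : Continuous T) (x : X) (n : ℕ) {ε : ℝ} (hε : 0 < ε) :
    ∀ᶠ w in 𝓝 x, ∀ j < n, dist (T^[j] w) (T^[j] x) < ε :=
  (eventually_all_finite (Set.finite_lt_nat n)).2 fun j _ =>
    (hT.iterate j).continuousAt.eventually (Metric.ball_mem_nhds _ hε)

theorem stmt17 {X : Type*} [MetricSpace X] [CompactSpace X]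
    (T : X → X) (hT : Continuous T)
    (hmin : ∀ x : X, Dense (Set.range fun n : ℕ => T^[n] x)) :
    ∀ ε : ℝ, 0 < ε → ∃ m : ℕ, ∀ x₁ x₂ : X, ∀ n : ℕ, 0 < n → ∀ ε' : ℝ, 0 < ε' →
      ∃ l : ℕ, l ≤ m ∧ ∃ z : X, dist z x₁ < ε ∧
        ∀ j : ℕ, j < n → dist (T^[l + j] z) (T^[j] x₂) < ε' := by
  intro ε hε
  obtain ⟨m, hm⟩ := exists_forall_exists_iterate_le_dist_lt hT hmin hε
  refine ⟨m, fun x₁ x₂ n _ ε' hε' => ?_⟩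
  obtain ⟨_, ⟨j₀, rfl⟩, hshadow⟩ :=
    (hmin (T^[m] x₂)).inter_nhds_nonempty (eventually_forall_lt_dist_iterate_lt hT x₂ n hε')
  obtain ⟨k, hkm, hk⟩ := hm (T^[j₀] x₂) x₁
  refine ⟨m - k, Nat.sub_le m k, T^[k] (T^[j₀] x₂), hk, fun j hj => ?_⟩
  have hiter : T^[m - k + j] (T^[k] (T^[j₀] x₂)) = T^[j] (T^[j₀] (T^[m] x₂)) := by
    simp only [← Function.iterate_add_apply]
    congr 1
    omega
  exact hiter ▸ hshadow j hj
end

section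
/- Let X be a compact metric space, T : X → X continuous, and K a nonempty compact set of T-invariant Borel probability measures (weak* topology). Suppose that for every ε > 0 the set {x ∈ X : V_T(x) ∩ B(K,ε) ≠ ∅} is dense in X, where B(K,ε) is the ε-neighborhood of K in a weak* metric and V_T(x) is the accumulation set of the empirical measures of x. Then the set {x ∈ X : V_T(x) ∩ K ≠ ∅} is residual in X. -/
open MeasureTheory Filter Topology ENNReal

noncomputable def empMeas {X : Type*} [TopologicalSpace X] [MeasurableSpace X]
    [OpensMeasurableSpace X] (T : X → X) (x : X) (n : ℕ) : ProbabilityMeasure X :=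
  ⟨((n + 1 : ℕ) : ℝ≥0∞)⁻¹ • ∑ i ∈ Finset.range (n + 1), Measure.dirac (T^[i] x), by
    refine ⟨?_⟩
    rw [Measure.smul_apply, Measure.finset_sum_apply]
    simp only [measure_univ, Finset.sum_const, Finset.card_range, nsmul_eq_mul, mul_one,
      smul_eq_mul]
    exact ENNReal.inv_mul_cancel (by exact_mod_cast Nat.succ_ne_zero n)
      (ENNReal.natCast_ne_top _)⟩

/-- `V_T(x)`: the set of weak* accumulation points of the empirical measures
`(1/n) ∑_{i<n} δ_{T^i x}` (indexed so that `empMeas T x n` uses `n+1` points). -/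
def VT {X : Type*} [TopologicalSpace X] [MeasurableSpace X] [OpensMeasurableSpace X]
    (T : X → X) (x : X) : Set (ProbabilityMeasure X) :=
  {μ | MapClusterPt μ atTop (empMeas T x)}

/-- The set of `T`-invariant Borel probability measures. -/
def invProb {X : Type*} [TopologicalSpace X] [MeasurableSpace X] (T : X → X) :
    Set (ProbabilityMeasure X) :=
  {μ | (μ : Measure X).map T = (μ : Measure X)}

/-! For an open `U ⊇ K`, the points whose empirical measures lie in `U` infinitely often form a
countable intersection of open sets (each `x ↦ empMeas T x n` is weak* continuous) containing the
dense set of points with an accumulation point in `U`, hence a residual set. Intersecting over a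
countable neighbourhood basis `U_m` of the compact set `K`, a point of the resulting residual set
visits every `U_m` infinitely often, and compactness of `K` turns this into an accumulation
point in `K`. -/

theorem IsCompact.exists_mapClusterPt_of_frequently_nhdsSet {X ι : Type*} [TopologicalSpace X]
    {K : Set X} {l : Filter ι} {u : ι → X} (hK : IsCompact K)
    (hu : ∀ U ∈ 𝓝ˢ K, ∃ᶠ i in l, u i ∈ U) : ∃ x ∈ K, MapClusterPt x l u := by
  have hne : (𝓝ˢ K ⊓ map u l).NeBot :=
    inf_neBot_iff.2 fun U hU V hV =>
      let ⟨i, hi⟩ := ((hu U hU).and_eventually hV).exists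
      ⟨u i, hi⟩
  simpa [hK.nhdsSet_inf_eq_biSup, MapClusterPt, ClusterPt] using hne

theorem setOf_frequently_mem_residual {X Y : Type*} [TopologicalSpace X] [TopologicalSpace Y]
    {u : X → ℕ → Y} (hu : ∀ n, Continuous fun x => u x n) {U : Set Y} (hU : IsOpen U)
    (hdense : Dense {x | ∃ᶠ n in atTop, u x n ∈ U}) :
    {x | ∃ᶠ n in atTop, u x n ∈ U} ∈ residual X := by
  have hset_eq : {x | ∃ᶠ n in atTop, u x n ∈ U} = ⋂ N, ⋃ n ≥ N, {x | u x n ∈ U} := by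
    ext x
    simp [frequently_atTop]
  rw [hset_eq] at hdense ⊢
  refine countable_iInter_mem.2 fun N => residual_of_dense_open ?_ ?_
  · exact isOpen_biUnion fun n _ => hU.preimage (hu n)
  · exact hdense.mono (Set.iInter_subset _ N)

theorem setOf_mapClusterPt_inter_nonempty_mem_residual {X Y : Type*} [TopologicalSpace X]
    [TopologicalSpace Y] [TopologicalSpace.PseudoMetrizableSpace Y]
    {u : X → ℕ → Y} (hu : ∀ n, Continuous fun x => u x n) {K : Set Y} (hK : IsCompact K)
    (hdense : ∀ U, IsOpen U → K ⊆ U →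
      Dense {x | ({y | MapClusterPt y atTop (u x)} ∩ U).Nonempty}) :
    {x | ({y | MapClusterPt y atTop (u x)} ∩ K).Nonempty} ∈ residual X := by
  let := TopologicalSpace.pseudoMetrizableSpacePseudoMetric Y
  set V : ℕ → Set Y := fun m => Metric.thickening (1 / (m + 1 : ℝ)) K
  have hV : (𝓝ˢ K).HasBasis (fun _ => True) V :=
    (Metric.hasBasis_nhdsSet_thickening hK).to_hasBasis
      (fun δ hδ => let ⟨m, hm⟩ := exists_nat_one_div_lt hδ
        ⟨m, trivial, Metric.thickening_mono hm.le K⟩)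
      fun m _ => ⟨_, Nat.one_div_pos_of_nat, subset_rfl⟩
  have hfreq (m : ℕ) : {x | ∃ᶠ n in atTop, u x n ∈ V m} ∈ residual X := by
    have hVm : IsOpen (V m) := Metric.isOpen_thickening
    refine setOf_frequently_mem_residual hu hVm <|
      (hdense _ hVm <| Metric.self_subset_thickening Nat.one_div_pos_of_nat K).mono ?_
    rintro x ⟨y, hy, hyV⟩
    exact hy.frequently (hVm.mem_nhds hyV)
  refine mem_of_superset (countable_iInter_mem.2 hfreq) fun x hx => ?_
  obtain ⟨y, hyK, hy⟩ := hK.exists_mapClusterPt_of_frequently_nhdsSet (u := u x) fun U hU =>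
    let ⟨m, _, hmU⟩ := hV.mem_iff.1 hU
    (Set.mem_iInter.1 hx m).mono fun _ => (hmU ·)
  exact ⟨y, hy, hyK⟩

theorem integral_empMeas {X : Type*} [TopologicalSpace X] [MeasurableSpace X]
    [OpensMeasurableSpace X] (T : X → X) (x : X) (n : ℕ) (f : BoundedContinuousFunction X ℝ) :
    ∫ y, f y ∂(empMeas T x n : Measure X) =
      (n + 1 : ℝ)⁻¹ * ∑ i ∈ Finset.range (n + 1), f (T^[i] x) := by
  change ∫ y, f y ∂((((n + 1 : ℕ) : ℝ≥0∞))⁻¹ •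
    ∑ i ∈ Finset.range (n + 1), Measure.dirac (T^[i] x)) = _
  rw [integral_smul_measure, integral_finsetSum_measure fun i _ => f.integrable _]
  simp [integral_dirac' _ _ f.continuous.stronglyMeasurable, ENNReal.toReal_add]

theorem continuous_empMeas {X : Type*} [TopologicalSpace X] [MeasurableSpace X]
    [OpensMeasurableSpace X] {T : X → X} (hT : Continuous T) (n : ℕ) :
    Continuous fun x => empMeas T x n :=
  ProbabilityMeasure.continuous_iff_forall_continuous_integral.2 fun f => by
    simp only [integral_empMeas]
    exact continuous_const.mul <|
      continuous_finsetSum _ fun i _ => f.continuous.comp (hT.iterate i)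

theorem stmt19_general {X : Type*} [MetricSpace X] [CompactSpace X] [MeasurableSpace X] [BorelSpace X]
    (T : X → X) (hT : Continuous T)
    (K : Set (ProbabilityMeasure X)) (hKc : IsCompact K)
    (hdense : ∀ U : Set (ProbabilityMeasure X), IsOpen U → K ⊆ U →
      Dense {x : X | (VT T x ∩ U).Nonempty}) :
    {x : X | (VT T x ∩ K).Nonempty} ∈ residual X :=
  setOf_mapClusterPt_inter_nonempty_mem_residual (continuous_empMeas hT) hKc hdense

theorem stmt19 {X : Type*} [MetricSpace X] [CompactSpace X] [MeasurableSpace X] [BorelSpace X]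
    (T : X → X) (hT : Continuous T)
    (K : Set (ProbabilityMeasure X)) (hKne : K.Nonempty) (hKc : IsCompact K)
    (hK : K ⊆ invProb T)
    (hdense : ∀ U : Set (ProbabilityMeasure X), IsOpen U → K ⊆ U →
      Dense {x : X | (VT T x ∩ U).Nonempty}) :
    {x : X | (VT T x ∩ K).Nonempty} ∈ residual X :=
  stmt19_general T hT K hKc hdense
end
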